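/- arXiv:1607.04590 — 2 statements merged into one kernel-verified Lean document; each statement's English description precedes it below -/
import Mathlib

section
/- The sequence of generalized spiral configurations is quasi-uniform: there exist constants c > 0 and C > 0 such that for all N ≥ 2, the separation satisfies δ(ω_N) ≥ c·N^{−1/2} and the covering radius satisfies η(ω_N) ≤ C·N^{−1/2}. -/
open MeasureTheory Metric Filter Real Topology

noncomputable section

/-- Euclidean space `ℝ³`. -/
abbrev E3 := EuclideanSpace ℝ (Fin 3)

/-- The unit sphere `S² ⊂ ℝ³`. -/
def S2 : Set E3 := Metric.sphere 0 1

/-- Constructor for points of `ℝ³` from coordinates. -/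
def pt3 (a b c : ℝ) : E3 := (EuclideanSpace.equiv (Fin 3) ℝ).symm ![a, b, c]

/-- Polar angle `φ_k = arccos(1 - (2k-1)/N)` of the `k`-th generalized spiral point. -/
def spiralPhi (N k : ℕ) : ℝ := Real.arccos (1 - (2 * (k : ℝ) - 1) / N)

/-- Azimuth `θ_k = √(Nπ)·φ_k` of the `k`-th generalized spiral point. -/
def spiralTheta (N k : ℕ) : ℝ := Real.sqrt (N * π) * spiralPhi N k

/-- The `k`-th generalized spiral point on `S²`. -/
def spiralPt (N k : ℕ) : E3 :=
  pt3 (Real.sin (spiralPhi N k) * Real.cos (spiralTheta N k))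
      (Real.sin (spiralPhi N k) * Real.sin (spiralTheta N k))
      (Real.cos (spiralPhi N k))

/-- The generalized spiral configuration `ω_N = {x_1, …, x_N}`. -/
def spiralCfg (N : ℕ) : Set E3 := spiralPt N '' Set.Icc 1 N

/-- Separation `δ(ω) = min_{x ≠ y ∈ ω} |x - y|`. -/
def separation (ω : Set E3) : ℝ :=
  sInf ((fun p : E3 × E3 => dist p.1 p.2) '' {p | p.1 ∈ ω ∧ p.2 ∈ ω ∧ p.1 ≠ p.2})

/-- Covering radius `η(ω) = max_{y ∈ S²} min_{x ∈ ω} |x - y|`. -/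
def covering (ω : Set E3) : ℝ :=
  sSup ((fun y => Metric.infDist y ω) '' S2)

/-!
The spiral points are the samples `x_k = γ(φ_k)` of the curve
`γ(t) = (sin t cos qt, sin t sin qt, cos t)`, `q = √(Nπ)`, at heights `cos φ_k` spaced `2/N` apart.
For two samples, either their polar angles differ by at least `√(2/N)`, or the height gap forces
`sin φ · Δφ ≥ 1/N` at both ends; then `qΔφ ≤ π` and the azimuthal part of the chord is of order
`√N · sin φ · Δφ ≥ N^{-1/2}`. For the covering radius, a point of `S²` lies within `2π/q` in
polar angle of a point `γ(t)` with the same azimuth modulo `2π`, and `γ(t)` is close to the sample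
whose height is nearest to `cos t`: a height gap of at most `1/N` forces `Δφ = O(N^{-1/2})` and
`sin φ · Δφ = O(1/N)`.
-/

lemma cos_sub_cos_add_le {x u : ℝ} (hu : 0 ≤ u) (hx : 0 ≤ sin x) :
    cos x - cos (x + u) ≤ sin x * u + u ^ 2 / 2 := by
  rw [cos_add]
  nlinarith [sin_le hu, one_sub_sq_div_two_le_cos (x := u), cos_le_one u, cos_le_one x,
    neg_one_le_cos x]

lemma cos_sub_sub_cos_le {x u : ℝ} (hu : 0 ≤ u) (hx : 0 ≤ sin x) :
    cos (x - u) - cos x ≤ sin x * u + u ^ 2 / 2 := by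
  rw [cos_sub]
  nlinarith [sin_le hu, one_sub_sq_div_two_le_cos (x := u), cos_le_one u, cos_le_one x,
    neg_one_le_cos x]

lemma one_sub_cos_sub_le_cos_sub_cos {a b : ℝ} (ha : 0 ≤ a) (hab : a ≤ b) (hb : b ≤ π) :
    1 - cos (b - a) ≤ cos a - cos b := by
  have hsa : 0 ≤ sin a := sin_nonneg_of_nonneg_of_le_pi ha (hab.trans hb)
  have hsb : 0 ≤ sin b := sin_nonneg_of_nonneg_of_le_pi (ha.trans hab) hb
  have hcos : cos b ≤ cos a := cos_le_cos_of_nonneg_of_le_pi ha hb hab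
  -- compare squares, using `sin² x = (1 - cos x)(1 + cos x)` and `cos b ≤ cos a`
  have key : (1 - cos a) * (1 + cos b) ≤ sin a * sin b := by
    apply abs_le_of_sq_le_sq _ (mul_nonneg hsa hsb) |>.trans' (le_abs_self _)
    have h1 := sin_sq_add_cos_sq a
    have h2 := sin_sq_add_cos_sq b
    nlinarith [mul_nonneg (mul_nonneg (sub_nonneg.2 (cos_le_one a)) (neg_le_iff_add_nonneg.1
      (neg_one_le_cos b))) (sub_nonneg.2 hcos), sq_nonneg ((1 - cos a) * (1 + cos b))]
  rw [cos_sub]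
  nlinarith

lemma one_sub_cos_sub_le_abs_cos_sub_cos {a b : ℝ} (ha : a ∈ Set.Icc 0 π) (hb : b ∈ Set.Icc 0 π) :
    1 - cos (a - b) ≤ |cos a - cos b| := by
  rcases le_total a b with hab | hba
  · rw [← cos_neg, neg_sub,
      abs_of_nonneg (sub_nonneg.2 (cos_le_cos_of_nonneg_of_le_pi ha.1 hb.2 hab))]
    exact one_sub_cos_sub_le_cos_sub_cos ha.1 hab hb.2
  · rw [abs_sub_comm, abs_of_nonneg (sub_nonneg.2 (cos_le_cos_of_nonneg_of_le_pi hb.1 ha.2 hba))]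
    exact one_sub_cos_sub_le_cos_sub_cos hb.1 hba ha.2

lemma sin_mul_sin_abs_sub_le {a b : ℝ} (ha : a ∈ Set.Icc 0 π) (hb : b ∈ Set.Icc 0 π) :
    sin a * sin |a - b| ≤ 2 * |cos a - cos b| := by
  have hu := one_sub_cos_sub_le_abs_cos_sub_cos ha hb
  have hca := abs_le.1 (abs_cos_le_one a)
  rcases le_total a b with hab | hba
  · obtain ⟨u, hu0, rfl⟩ : ∃ u, 0 ≤ u ∧ b = a + u := ⟨b - a, by linarith, by ring⟩
    rw [show a - (a + u) = -u by ring, abs_neg, abs_of_nonneg hu0, cos_neg, cos_add] at *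
    nlinarith [le_abs_self (cos a - (cos a * cos u - sin a * sin u)), cos_le_one u]
  · obtain ⟨u, hu0, rfl⟩ : ∃ u, 0 ≤ u ∧ b = a - u := ⟨a - b, by linarith, by ring⟩
    rw [show a - (a - u) = u by ring, abs_of_nonneg hu0, cos_sub] at *
    nlinarith [neg_abs_le (cos a - (cos a * cos u + sin a * sin u)), cos_le_one u]

def sphericalPt (φ θ : ℝ) : E3 := pt3 (sin φ * cos θ) (sin φ * sin θ) (cos φ)

lemma dist_pt3_sq (a b c a' b' c' : ℝ) :
    dist (pt3 a b c) (pt3 a' b' c') ^ 2 = (a - a') ^ 2 + (b - b') ^ 2 + (c - c') ^ 2 := by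
  rw [EuclideanSpace.dist_eq, sq_sqrt (by positivity)]
  simp [pt3, Fin.sum_univ_three, Real.dist_eq, sq_abs]

lemma dist_sphericalPt_sq (φ₁ θ₁ φ₂ θ₂ : ℝ) :
    dist (sphericalPt φ₁ θ₁) (sphericalPt φ₂ θ₂) ^ 2 =
      2 - 2 * cos (φ₁ - φ₂) + 2 * sin φ₁ * sin φ₂ * (1 - cos (θ₁ - θ₂)) := by
  rw [sphericalPt, sphericalPt, dist_pt3_sq, cos_sub, cos_sub]
  nlinarith [sin_sq_add_cos_sq φ₁, sin_sq_add_cos_sq φ₂, sin_sq_add_cos_sq θ₁,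
    sin_sq_add_cos_sq θ₂]

lemma dist_sphericalPt_of_theta_eq_le (φ₁ φ₂ θ : ℝ) :
    dist (sphericalPt φ₁ θ) (sphericalPt φ₂ θ) ≤ |φ₁ - φ₂| := by
  apply abs_le_of_sq_le_sq _ (abs_nonneg _) |>.trans' (le_abs_self _)
  rw [dist_sphericalPt_sq, sub_self, cos_zero, sq_abs]
  nlinarith [one_sub_sq_div_two_le_cos (x := φ₁ - φ₂)]

lemma dist_sphericalPt_of_phi_eq_le (φ θ₁ θ₂ : ℝ) :
    dist (sphericalPt φ θ₁) (sphericalPt φ θ₂) ≤ |sin φ| * |θ₁ - θ₂| := by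
  apply abs_le_of_sq_le_sq _ (by positivity) |>.trans' (le_abs_self _)
  rw [dist_sphericalPt_sq, sub_self, cos_zero, mul_pow, sq_abs, sq_abs]
  nlinarith [one_sub_sq_div_two_le_cos (x := θ₁ - θ₂), sq_nonneg (sin φ)]

lemma sphericalPt_add_int_mul_two_pi (φ θ : ℝ) (m : ℤ) :
    sphericalPt φ (θ + m * (2 * π)) = sphericalPt φ θ := by
  simp only [sphericalPt, cos_add_int_mul_two_pi, sin_add_int_mul_two_pi]

lemma exists_sphericalPt_eq {y : E3} (hy : y ∈ S2) :
    ∃ φ ∈ Set.Icc 0 π, ∃ θ, sphericalPt φ θ = y := by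
  have hsum : y 0 ^ 2 + y 1 ^ 2 + y 2 ^ 2 = 1 := by
    have h := EuclideanSpace.real_norm_sq_eq y
    rw [mem_sphere_zero_iff_norm.1 hy, Fin.sum_univ_three] at h
    linarith
  have hz : y 2 ∈ Set.Icc (-1) 1 := by
    constructor <;> nlinarith [sq_nonneg (y 0), sq_nonneg (y 1)]
  set w : ℂ := ⟨y 0, y 1⟩
  have hw : ‖w‖ = sin (arccos (y 2)) := by
    rw [sin_arccos, Complex.norm_def, Complex.normSq_mk]
    congr 1
    nlinarith
  refine ⟨arccos (y 2), ⟨arccos_nonneg _, arccos_le_pi _⟩, w.arg, ?_⟩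
  ext i
  fin_cases i
  · simp [sphericalPt, pt3, ← hw, Complex.norm_mul_cos_arg, w]
  · simp [sphericalPt, pt3, ← hw, Complex.norm_mul_sin_arg, w]
  · simp [sphericalPt, pt3, cos_arccos hz.1 hz.2]

def spiralCurve (q t : ℝ) : E3 := sphericalPt t (q * t)

lemma dist_spiralCurve_le {q a : ℝ} (hq : 0 ≤ q) (ha : 0 ≤ sin a) (b : ℝ) :
    dist (spiralCurve q a) (spiralCurve q b) ≤ |a - b| + q * (sin a * |a - b|) := by
  calc dist (spiralCurve q a) (spiralCurve q b)
      ≤ dist (sphericalPt a (q * a)) (sphericalPt a (q * b)) +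
          dist (sphericalPt a (q * b)) (sphericalPt b (q * b)) :=
        dist_triangle _ _ _
    _ ≤ |sin a| * |q * a - q * b| + |a - b| :=
        add_le_add (dist_sphericalPt_of_phi_eq_le _ _ _) (dist_sphericalPt_of_theta_eq_le _ _ _)
    _ = |a - b| + q * (sin a * |a - b|) := by
        rw [abs_of_nonneg ha, ← mul_sub, abs_mul, abs_of_nonneg hq]
        ring

lemma exists_dist_sphericalPt_spiralCurve_le {q φ : ℝ} (hq : 2 ≤ q) (hφ : φ ∈ Set.Icc 0 π) (θ : ℝ) :
    ∃ t ∈ Set.Icc 0 π, dist (sphericalPt φ θ) (spiralCurve q t) ≤ 2 * π / q := by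
  have hq0 : 0 < q := by linarith
  have hL : 2 * π / q ≤ π := by
    rw [div_le_iff₀ hq0]; nlinarith [pi_pos]
  set α := min φ (π - 2 * π / q)
  have hα0 : 0 ≤ α := le_min hφ.1 (by linarith)
  have hαφ : φ - 2 * π / q ≤ α := le_min (by linarith [div_pos two_pi_pos hq0]) (by linarith [hφ.2])
  obtain ⟨hs₁, hs₂⟩ := toIcoMod_mem_Ico two_pi_pos (q * α) θ
  obtain ⟨n, hn⟩ : ∃ n : ℤ, θ + n * (2 * π) = toIcoMod two_pi_pos (q * α) θ :=
    ⟨-toIcoDiv two_pi_pos (q * α) θ, by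
      rw [← self_sub_toIcoDiv_zsmul, zsmul_eq_mul]; push_cast; ring⟩
  set s := toIcoMod two_pi_pos (q * α) θ
  have hαs : α ≤ s / q := by rw [le_div_iff₀ hq0]; linarith
  have hsα : s / q ≤ α + 2 * π / q := by
    rw [div_le_iff₀ hq0, add_mul, div_mul_cancel₀ _ hq0.ne']; linarith
  refine ⟨s / q, ⟨hα0.trans hαs, hsα.trans (by linarith [min_le_right φ (π - 2 * π / q)])⟩, ?_⟩
  have hcurve : spiralCurve q (s / q) = sphericalPt (s / q) θ := by
    rw [spiralCurve, mul_div_cancel₀ _ hq0.ne', ← sphericalPt_add_int_mul_two_pi _ θ n, hn]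
  rw [hcurve]
  refine (dist_sphericalPt_of_theta_eq_le _ _ _).trans (abs_le.2 ⟨?_, ?_⟩)
  · linarith [min_le_left φ (π - 2 * π / q)]
  · linarith

lemma half_le_dist_spiralCurve_sq {ε q a b : ℝ} (hε : 0 < ε) (hq : q ^ 2 * ε = π)
    (ha : 0 ≤ a) (hab : a ≤ b) (hb : b ≤ π) (hcos : 2 * ε ≤ cos a - cos b) :
    ε / 2 ≤ dist (spiralCurve q a) (spiralCurve q b) ^ 2 := by
  have hsa : 0 ≤ sin a := sin_nonneg_of_nonneg_of_le_pi ha (hab.trans hb)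
  have hsb : 0 ≤ sin b := sin_nonneg_of_nonneg_of_le_pi (ha.trans hab) hb
  obtain ⟨u, hu0, rfl⟩ : ∃ u, 0 ≤ u ∧ b = a + u := ⟨b - a, by linarith, by ring⟩
  rw [spiralCurve, spiralCurve, dist_sphericalPt_sq, ← mul_sub, sub_add_cancel_left, mul_neg,
    cos_neg]
  rcases le_or_gt (2 * ε) (u ^ 2) with hbig | hsmall
  · -- the polar angles alone are `√(2ε)` apart
    have hcu := cos_le_one_sub_mul_cos_sq (show |u| ≤ π by rw [abs_of_nonneg hu0]; linarith)
    have hk : 1 / 8 ≤ 2 / π ^ 2 := by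
      rw [div_le_div_iff₀ (by norm_num) (by positivity)]; nlinarith [pi_le_four, pi_pos]
    nlinarith [mul_le_mul_of_nonneg_right hk (sq_nonneg u),
      mul_nonneg (mul_nonneg hsa hsb) (sub_nonneg.2 (cos_le_one (-(q * u))))]
  · -- close polar angles: the height gap makes the azimuthal term large
    have hau : ε ≤ sin a * u := by linarith [cos_sub_cos_add_le hu0 hsa]
    have hbu : ε ≤ sin (a + u) * u := by
      have := cos_sub_sub_cos_le hu0 hsb
      rw [add_sub_cancel_right] at this
      linarith
    have hqu : |-(q * u)| ≤ π := by
      rw [abs_neg]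
      apply abs_le_of_sq_le_sq _ pi_pos.le
      nlinarith [pi_gt_three, mul_le_mul_of_nonneg_left hsmall.le (sq_nonneg q)]
    have h4π : 1 ≤ 4 / π := by rw [le_div_iff₀ pi_pos]; linarith [pi_le_four]
    calc ε / 2 ≤ 4 / π ^ 2 * (q ^ 2 * ε) * ε := by
          rw [hq, show 4 / π ^ 2 * π = 4 / π by field_simp]; nlinarith
      _ = 4 / π ^ 2 * q ^ 2 * (ε * ε) := by ring
      _ ≤ 4 / π ^ 2 * q ^ 2 * (sin a * u * (sin (a + u) * u)) := by
          gcongr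
      _ = 2 * sin a * sin (a + u) * (2 / π ^ 2 * (-(q * u)) ^ 2) := by ring
      _ ≤ 2 * sin a * sin (a + u) * (1 - cos (-(q * u))) := by
          gcongr; linarith [cos_le_one_sub_mul_cos_sq hqu]
      _ ≤ _ := by linarith [cos_le_one u]

lemma dist_spiralCurve_le_of_abs_cos_sub_cos_le {ε q a b : ℝ} (hε : ε ≤ 1 / 2) (hq : 0 ≤ q)
    (ha : a ∈ Set.Icc 0 π) (hb : b ∈ Set.Icc 0 π) (hab : |cos a - cos b| ≤ ε) :
    dist (spiralCurve q a) (spiralCurve q b) ≤ 3 * √ε + q * (π * ε) := by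
  have hsa : 0 ≤ sin a := sin_nonneg_of_nonneg_of_le_pi ha.1 ha.2
  have hsq : (a - b) ^ 2 ≤ π ^ 2 / 2 * ε := by
    have hab_le : |a - b| ≤ π :=
      abs_sub_le_iff.2 ⟨by linarith [ha.2, hb.1], by linarith [ha.1, hb.2]⟩
    have h : 2 / π ^ 2 * (a - b) ^ 2 ≤ ε := by
      linarith [cos_le_one_sub_mul_cos_sq hab_le, one_sub_cos_sub_le_abs_cos_sub_cos ha hb]
    calc (a - b) ^ 2 = π ^ 2 / 2 * (2 / π ^ 2 * (a - b) ^ 2) := by field_simp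
      _ ≤ π ^ 2 / 2 * ε := by gcongr
  have hε0 : 0 ≤ ε := by nlinarith [abs_nonneg (cos a - cos b)]
  have hu : |a - b| ≤ 3 * √ε := by
    apply abs_le_of_sq_le_sq _ (by positivity)
    have hπ : π ^ 2 ≤ 16 := by nlinarith [pi_le_four, pi_pos]
    rw [mul_pow, sq_sqrt hε0]
    nlinarith [mul_le_mul_of_nonneg_right hπ hε0]
  have hsin : sin a * |a - b| ≤ π * ε := by
    have hu2 : |a - b| ≤ π / 2 := by
      apply abs_le_of_sq_le_sq _ (by positivity)
      nlinarith [pi_pos]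
    have := mul_le_sin (abs_nonneg (a - b)) hu2
    have := sin_mul_sin_abs_sub_le ha hb
    calc sin a * |a - b| = π / 2 * (sin a * (2 / π * |a - b|)) := by field_simp
      _ ≤ π / 2 * (sin a * sin |a - b|) := by gcongr
      _ ≤ π * ε := by nlinarith [pi_pos]
  calc dist (spiralCurve q a) (spiralCurve q b) ≤ |a - b| + q * (sin a * |a - b|) :=
        dist_spiralCurve_le hq hsa b
    _ ≤ 3 * √ε + q * (π * ε) := by gcongr

lemma spiralPt_eq_spiralCurve (N k : ℕ) :
    spiralPt N k = spiralCurve √(N * π) (spiralPhi N k) := rfl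

lemma spiralPhi_mem_Icc (N k : ℕ) : spiralPhi N k ∈ Set.Icc 0 π :=
  ⟨arccos_nonneg _, arccos_le_pi _⟩

lemma cos_spiralPhi {N k : ℕ} (hk : k ∈ Set.Icc 1 N) :
    cos (spiralPhi N k) = 1 - (2 * k - 1) / N := by
  have hk1 : (1 : ℝ) ≤ k := by exact_mod_cast hk.1
  have hkN : (k : ℝ) ≤ N := by exact_mod_cast hk.2
  have hN : (0 : ℝ) < N := by linarith
  apply cos_arccos
  · rw [neg_le_sub_iff_le_add, div_le_iff₀ hN]; linarith
  · rw [sub_le_self_iff]; exact div_nonneg (by linarith) hN.le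

lemma exists_abs_sub_cos_spiralPhi_le {N : ℕ} (hN : 1 ≤ N) {c : ℝ} (hc : c ∈ Set.Icc (-1) 1) :
    ∃ k ∈ Set.Icc 1 N, |c - cos (spiralPhi N k)| ≤ 1 / N := by
  have hN0 : (0 : ℝ) < N := by exact_mod_cast hN
  -- `c = 1 - 2x / N` and `cos (spiralPhi N k) = 1 - (2k - 1) / N`, so any `k ∈ [x, x + 1]` works
  set x := N * (1 - c) / 2
  have hx0 : 0 ≤ x := by have := hc.2; positivity
  have hxN : x ≤ N := by rw [div_le_iff₀ two_pos]; nlinarith [hc.1]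
  set k := max 1 ⌈x⌉₊
  have hk : k ∈ Set.Icc 1 N := ⟨le_max_left _ _, max_le hN (Nat.ceil_le.2 hxN)⟩
  have hk₁ : x ≤ k := (Nat.le_ceil x).trans (by exact_mod_cast le_max_right _ _)
  have hk₂ : (k : ℝ) ≤ x + 1 := by
    simp only [k, Nat.cast_max, Nat.cast_one]
    exact max_le (by linarith) (Nat.ceil_lt_add_one hx0).le
  refine ⟨k, hk, ?_⟩
  rw [cos_spiralPhi hk, show c - (1 - (2 * (k : ℝ) - 1) / N) = (2 * k - 1 - 2 * x) / N by
      simp only [x]; field_simp; ring,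
    abs_div, abs_of_pos hN0, div_le_div_iff_of_pos_right hN0, abs_le]
  constructor <;> linarith

lemma half_div_sqrt_le_dist_spiralPt {N j k : ℕ} (hj : 1 ≤ j) (hjk : j < k) (hk : k ≤ N) :
    1 / 2 / √N ≤ dist (spiralPt N j) (spiralPt N k) := by
  have hN : (0 : ℝ) < N := Nat.cast_pos.2 (by omega)
  have hjk' : (j : ℝ) + 1 ≤ k := by exact_mod_cast hjk
  have hq : √(N * π) ^ 2 * (1 / N) = π := by
    rw [sq_sqrt (by positivity)]; field_simp
  have hcos : 2 * (1 / N) ≤ cos (spiralPhi N j) - cos (spiralPhi N k) := by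
    rw [cos_spiralPhi ⟨hj, by omega⟩, cos_spiralPhi ⟨by omega, hk⟩,
      show 1 - (2 * (j : ℝ) - 1) / N - (1 - (2 * k - 1) / N) = 2 * (k - j) * (1 / N) by ring]
    gcongr
    linarith
  have hle : spiralPhi N j ≤ spiralPhi N k := arccos_le_arccos (by gcongr)
  have := half_le_dist_spiralCurve_sq (by positivity) hq (spiralPhi_mem_Icc N j).1 hle
    (spiralPhi_mem_Icc N k).2 hcos
  rw [spiralPt_eq_spiralCurve, spiralPt_eq_spiralCurve]
  apply abs_le_of_sq_le_sq _ dist_nonneg |>.trans' (le_abs_self _)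
  rw [div_pow, sq_sqrt hN.le]
  calc ((1 : ℝ) / 2) ^ 2 / N ≤ 1 / N / 2 := by
        rw [div_div, div_le_div_iff₀ hN (by positivity)]; nlinarith
    _ ≤ _ := this

lemma exists_dist_spiralPt_le {N : ℕ} (hN : 2 ≤ N) {y : E3} (hy : y ∈ S2) :
    ∃ k ∈ Set.Icc 1 N, dist y (spiralPt N k) ≤ 15 / √N := by
  have hN2 : (2 : ℝ) ≤ N := by exact_mod_cast hN
  have hsN : 0 < √N := sqrt_pos.2 (by linarith)
  have hq : √(N * π) = √N * √π := sqrt_mul (by linarith) π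
  have hr₂ : √π ≤ 2 := (sqrt_le_left zero_le_two).2 (by linarith [pi_le_four])
  have hq2 : 2 ≤ √(N * π) := le_sqrt_of_sq_le (by nlinarith [pi_gt_three])
  obtain ⟨φ, hφ, θ, rfl⟩ := exists_sphericalPt_eq hy
  obtain ⟨t, ht, hyt⟩ := exists_dist_sphericalPt_spiralCurve_le hq2 hφ θ
  obtain ⟨k, hk, hcos⟩ :=
    exists_abs_sub_cos_spiralPhi_le (N := N) (by omega) ⟨neg_one_le_cos t, cos_le_one t⟩
  have htk := dist_spiralCurve_le_of_abs_cos_sub_cos_le (q := √(N * π))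
    (by rw [div_le_div_iff₀] <;> linarith) (sqrt_nonneg _) ht (spiralPhi_mem_Icc N k) hcos
  refine ⟨k, hk, ?_⟩
  rw [spiralPt_eq_spiralCurve]
  calc dist (sphericalPt φ θ) (spiralCurve √(N * π) (spiralPhi N k))
      ≤ 2 * π / √(N * π) + (3 * √(1 / N) + √(N * π) * (π * (1 / N))) :=
        (dist_triangle _ _ _).trans (add_le_add hyt htk)
    _ = (2 * √π + 3 + √π ^ 3) / √N := by
        rw [hq, sqrt_div' _ (Nat.cast_nonneg N), sqrt_one]
        have hs := sq_sqrt (Nat.cast_nonneg N : (0 : ℝ) ≤ N)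
        have hr := sq_sqrt pi_pos.le
        have hr0 : 0 < √π := sqrt_pos.2 pi_pos
        generalize √(N : ℝ) = s at hs hsN ⊢
        generalize √π = r at hr hr0 ⊢
        rw [← hs, ← hr]
        field_simp
        ring
    _ ≤ 15 / √N := by gcongr; nlinarith [pow_le_pow_left₀ (sqrt_nonneg π) hr₂ 3]

lemma le_separation {ω : Set E3} {r : ℝ} (hne : ∃ x ∈ ω, ∃ y ∈ ω, x ≠ y)
    (h : ∀ x ∈ ω, ∀ y ∈ ω, x ≠ y → r ≤ dist x y) : r ≤ separation ω := by
  obtain ⟨x, hx, y, hy, hxy⟩ := hne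
  refine le_csInf ⟨_, (x, y), ⟨hx, hy, hxy⟩, rfl⟩ ?_
  rintro _ ⟨p, ⟨hp₁, hp₂, hp⟩, rfl⟩
  exact h _ hp₁ _ hp₂ hp

lemma covering_le {ω : Set E3} {r : ℝ} (hr : 0 ≤ r) (h : ∀ y ∈ S2, ∃ x ∈ ω, dist y x ≤ r) :
    covering ω ≤ r := by
  refine Real.sSup_le ?_ hr
  rintro _ ⟨y, hy, rfl⟩
  obtain ⟨x, hx, hxy⟩ := h y hy
  exact (infDist_le_dist_of_mem hx).trans hxy

lemma half_div_sqrt_le_separation_spiralCfg {N : ℕ} (hN : 2 ≤ N) :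
    1 / 2 / √N ≤ separation (spiralCfg N) := by
  have hsep : ∀ x ∈ spiralCfg N, ∀ y ∈ spiralCfg N, x ≠ y → 1 / 2 / √N ≤ dist x y := by
    rintro _ ⟨j, hj, rfl⟩ _ ⟨k, hk, rfl⟩ hne
    rcases lt_or_gt_of_ne (ne_of_apply_ne (spiralPt N) hne) with hjk | hkj
    · exact half_div_sqrt_le_dist_spiralPt hj.1 hjk hk.2
    · rw [dist_comm]
      exact half_div_sqrt_le_dist_spiralPt hk.1 hkj hj.2
  have h₁ : spiralPt N 1 ∈ spiralCfg N := ⟨1, ⟨le_rfl, by omega⟩, rfl⟩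
  have h₂ : spiralPt N 2 ∈ spiralCfg N := ⟨2, ⟨by omega, hN⟩, rfl⟩
  refine le_separation ⟨_, h₁, _, h₂, fun h => ?_⟩ hsep
  have := half_div_sqrt_le_dist_spiralPt (N := N) le_rfl one_lt_two hN
  rw [h, dist_self] at this
  have : 0 < 1 / 2 / √(N : ℝ) := by positivity
  linarith

/-- The sequence of generalized spiral configurations is quasi-uniform: there are
constants `c, C > 0` with `δ(ω_N) ≥ c·N^{-1/2}` and `η(ω_N) ≤ C·N^{-1/2}` for all `N ≥ 2`. -/
theorem spiral_quasiUniform :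
    ∃ c > (0 : ℝ), ∃ C > (0 : ℝ), ∀ N : ℕ, 2 ≤ N →
      c / Real.sqrt N ≤ separation (spiralCfg N) ∧
      covering (spiralCfg N) ≤ C / Real.sqrt N := by
  refine ⟨1 / 2, by norm_num, 15, by norm_num, fun N hN => ⟨?_, ?_⟩⟩
  · exact half_div_sqrt_le_separation_spiralCfg hN
  · refine covering_le (by positivity) fun y hy => ?_
    obtain ⟨k, hk, hyk⟩ := exists_dist_spiralPt_le hN hy
    exact ⟨_, ⟨k, hk, rfl⟩, hyk⟩

end
end

section
/- For all integers k ≥ 1 and 1 ≤ i ≤ k, one has 2·√(2i²/(3k²) − i⁴/(9k⁴))·sin(π/(4i)) ≥ √10/(3k). -/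
open Real

/-! Since `i ≤ k`, the squared ring radius `2u²/3 − u⁴/9` (with `u = i/k`) is at least `5u²/9`,
so `r_i ≥ √5·i/(3k)`; concavity of `sin` on `[0, π]` gives `sin (π/(4i)) ≥ sin (π/4)/i`.
Multiplying, the factors of `i` cancel and `2·(√5/3k)·(√2/2) = √10/(3k)`. -/

theorem Real.mul_sin_le_sin_mul {t x : ℝ} (ht₀ : 0 ≤ t) (ht₁ : t ≤ 1) (hx₀ : 0 ≤ x)
    (hx : x ≤ π) : t * sin x ≤ sin (t * x) := by
  simpa using strictConcaveOn_sin_Icc.concaveOn.2 ⟨le_rfl, pi_pos.le⟩ ⟨hx₀, hx⟩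
    (sub_nonneg.2 ht₁) ht₀ (by ring)

theorem Real.sqrt_two_div_two_div_le_sin_pi_div_four_mul {a : ℝ} (ha : 1 ≤ a) :
    √2 / 2 / a ≤ sin (π / (4 * a)) := by
  have h := mul_sin_le_sin_mul (t := a⁻¹) (x := π / 4) (by positivity) (inv_le_one_of_one_le₀ ha)
    (by positivity) (by linarith [pi_pos])
  rw [sin_pi_div_four] at h
  convert h using 2 <;> field_simp

theorem five_mul_sq_div_le_of_sq_le {a b : ℝ} (hab : a ^ 2 ≤ b ^ 2) :
    5 * a ^ 2 / (9 * b ^ 2) ≤ 2 * a ^ 2 / (3 * b ^ 2) - a ^ 4 / (9 * b ^ 4) := by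
  rcases eq_or_ne b 0 with rfl | hb
  · simp
  have key : 2 * a ^ 2 / (3 * b ^ 2) - a ^ 4 / (9 * b ^ 4) - 5 * a ^ 2 / (9 * b ^ 2)
      = a ^ 2 * (b ^ 2 - a ^ 2) / (9 * b ^ 4) := by field_simp; ring
  have : 0 ≤ a ^ 2 * (b ^ 2 - a ^ 2) / (9 * b ^ 4) :=
    div_nonneg (mul_nonneg (sq_nonneg a) (sub_nonneg.2 hab)) (by positivity)
  linarith

theorem sqrt_five_mul_div_le_sqrt {a b : ℝ} (ha : 0 ≤ a) (hab : a ≤ b) :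
    √5 * a / (3 * b) ≤ √(2 * a ^ 2 / (3 * b ^ 2) - a ^ 4 / (9 * b ^ 4)) := by
  have h5 : √5 * a / (3 * b) = √(5 * a ^ 2 / (9 * b ^ 2)) := by
    rw [sqrt_div' _ (by positivity), sqrt_mul' _ (sq_nonneg a), sqrt_sq ha,
      show 9 * b ^ 2 = (3 * b) ^ 2 by ring, sqrt_sq (by linarith)]
  rw [h5]
  exact sqrt_le_sqrt (five_mul_sq_div_le_of_sq_le (pow_le_pow_left₀ ha hab 2))

theorem healpix_polar_ring_separation_general (k i : ℕ) (hi : 1 ≤ i)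
    (hik : i ≤ k) :
    Real.sqrt 10 / (3 * (k : ℝ)) ≤
      2 * Real.sqrt (2 * (i : ℝ) ^ 2 / (3 * (k : ℝ) ^ 2) - (i : ℝ) ^ 4 / (9 * (k : ℝ) ^ 4))
        * Real.sin (π / (4 * (i : ℝ))) := by
  have ha : (1 : ℝ) ≤ i := by exact_mod_cast hi
  have hab : (i : ℝ) ≤ k := by exact_mod_cast hik
  have hradius := sqrt_five_mul_div_le_sqrt (by positivity) hab
  have hsin := sqrt_two_div_two_div_le_sin_pi_div_four_mul ha
  calc √10 / (3 * (k : ℝ)) = 2 * (√5 * i / (3 * k)) * (√2 / 2 / i) := by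
        rw [show (10 : ℝ) = 5 * 2 by norm_num, sqrt_mul (by norm_num)]
        field_simp
    _ ≤ _ := by gcongr

/-- Within-ring separation of the HEALPix nodes in the polar region: for all integers
`k ≥ 1` and `1 ≤ i ≤ k`, the distance `2·r_i·sin(π/(4i))` between adjacent points on
the `i`-th polar ring, of radius `r_i = √(2i²/(3k²) − i⁴/(9k⁴))` carrying `4i` equally
spaced points, is at least `√10/(3k)`. -/
theorem healpix_polar_ring_separation (k i : ℕ) (hk : 1 ≤ k) (hi : 1 ≤ i)
    (hik : i ≤ k) :
    Real.sqrt 10 / (3 * (k : ℝ)) ≤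
      2 * Real.sqrt (2 * (i : ℝ) ^ 2 / (3 * (k : ℝ) ^ 2) - (i : ℝ) ^ 4 / (9 * (k : ℝ) ^ 4))
        * Real.sin (π / (4 * (i : ℝ))) :=
  healpix_polar_ring_separation_general k i hi hik
end
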